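/- arXiv:2012.15818 — 3 statements merged into one kernel-verified Lean document; each statement's English description precedes it below -/
import Mathlib

section
/- A Christoffel word w = C(k, M−k) is the unique word in its cyclic conjugacy class [w] having the form 0·Q·1 with Q a palindrome. -/
/-- Two words are conjugate (cyclic rotations of each other). -/
def Conj {α : Type*} (w w' : List α) : Prop := ∃ x y : List α, w = x ++ y ∧ w' = y ++ x

/-- `u` is a factor of the circular word `[w]`. -/
def CFactor {α : Type*} (u w : List α) : Prop := ∃ w' : List α, Conj w w' ∧ u <:+: w'

/-- A (linear) word is balanced. -/
def WordIsBalanced {α : Type*} [DecidableEq α] (w : List α) : Prop :=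
  ∀ u v : List α, u <:+: w → v <:+: w → u.length = v.length →
    ∀ a : α, ((u.count a : ℤ) - v.count a) ∈ ({-1, 0, 1} : Set ℤ)

/-- A circular word is balanced. -/
def CircBalanced {α : Type*} [DecidableEq α] (w : List α) : Prop :=
  ∀ u v : List α, CFactor u w → CFactor v w → u.length = v.length →
    ∀ a : α, ((u.count a : ℤ) - v.count a) ∈ ({-1, 0, 1} : Set ℤ)

/-- The n-spectrum of a circular word: Parikh vectors of its length-n factors. -/
def circSpec {α : Type*} [DecidableEq α] (n : ℕ) (w : List α) : Set (α → ℕ) :=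
  {p | ∃ u : List α, CFactor u w ∧ u.length = n ∧ (fun a => u.count a) = p}

/-- Abelian complexity of a circular word. -/
noncomputable def circAb {α : Type*} [DecidableEq α] (n : ℕ) (w : List α) : ℕ :=
  (circSpec n w).ncard

/-- A word is primitive if it is not a proper power. -/
def Primitive {α : Type*} (w : List α) : Prop :=
  ∀ (u : List α) (q : ℕ), 2 ≤ q → w ≠ (List.replicate q u).flatten

/-- The lower Christoffel word `C(k, M-k)` of length `M` with `k` zeros. -/
def christoffel (k M : ℕ) : List (Fin 2) :=
  (List.range M).map (fun i => if i * (M - k) / M < (i + 1) * (M - k) / M then 1 else 0)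

/-!
Write `b = M - k`. Letter `i` of `C(k, M - k)` is `1` exactly when `(i + 1) b mod M < b`, so its
rotation by `j` is the mechanical word whose letter `i` is `1` iff `(s + (i + 1) b) mod M < b`,
with `s = j b mod M`. The shape `0·Q·1` forces `s < b ≤ (s + b) mod M`, and the palindrome `Q`
pairs position `i` with `M - 1 - i`, i.e. the residue `s + b + t` with `s - t` where `t = i b`;
as `b` is invertible mod `M`, every `t` other than `0` and `-b` comes from an inner position.
If `s ≠ 0`, the cases `t = 1` and `t = -1` give `M = s + b + 1` and `b = s + 1`, so `M = 2b`,
and coprimality forces `b = 1`, contradicting `0 < s < b`. Hence `s = 0`, and the rotation is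
`C(k, M - k)` itself.
-/

section MechanicalWord

variable {b M : ℕ}

def lowerLetter (b M n : ℕ) : Fin 2 := if n % M < b then 1 else 0

/-- The lower mechanical word of slope `b / M` and intercept `s / M`: letter `i` is
`⌊(s + (i + 1) b) / M⌋ - ⌊(s + i b) / M⌋`. -/
def mechanicalWord (b M s : ℕ) : List (Fin 2) :=
  (List.range M).map fun i => lowerLetter b M (s + (i + 1) * b)

lemma lowerLetter_congr {m n : ℕ} (h : (m : ZMod M) = n) :
    lowerLetter b M m = lowerLetter b M n := by
  rw [lowerLetter, lowerLetter, (ZMod.natCast_eq_natCast_iff' m n M).1 h]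

lemma lowerLetter_eq_lowerLetter_iff {m n : ℕ} :
    lowerLetter b M m = lowerLetter b M n ↔ (m % M < b ↔ n % M < b) := by
  unfold lowerLetter
  split_ifs <;> simp [*]

lemma lowerLetter_eq_zero_iff {n : ℕ} : lowerLetter b M n = 0 ↔ b ≤ n % M := by
  unfold lowerLetter
  split_ifs <;> simp <;> omega

lemma lowerLetter_eq_one_iff {n : ℕ} : lowerLetter b M n = 1 ↔ n % M < b := by
  unfold lowerLetter
  split_ifs <;> simp [*]

@[simp]
lemma length_mechanicalWord (s : ℕ) : (mechanicalWord b M s).length = M := by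
  simp [mechanicalWord]

lemma getElem_mechanicalWord (s i : ℕ) (hi : i < (mechanicalWord b M s).length) :
    (mechanicalWord b M s)[i] = lowerLetter b M (s + (i + 1) * b) := by
  simp [mechanicalWord]

lemma mechanicalWord_mod (s : ℕ) : mechanicalWord b M (s % M) = mechanicalWord b M s := by
  refine List.ext_getElem (by simp) fun i _ _ => ?_
  simp only [getElem_mechanicalWord]
  exact lowerLetter_congr (by push_cast [ZMod.natCast_mod]; rfl)

lemma mechanicalWord_rotate (s j : ℕ) :
    (mechanicalWord b M s).rotate j = mechanicalWord b M (s + j * b) := by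
  refine List.ext_getElem (by simp) fun i _ _ => ?_
  simp only [List.getElem_rotate, getElem_mechanicalWord, length_mechanicalWord]
  exact lowerLetter_congr (by push_cast [ZMod.natCast_mod]; ring)

lemma div_lt_succ_mul_div_iff (i : ℕ) (hbM : b < M) :
    i * b / M < (i + 1) * b / M ↔ (i + 1) * b % M < b := by
  have hM : 0 < M := by omega
  rw [add_one_mul, Nat.add_div hM, Nat.add_mod, Nat.div_eq_of_lt hbM, Nat.mod_eq_of_lt hbM]
  have := Nat.mod_lt (i * b) hM
  split_ifs with h
  · rw [Nat.mod_eq_sub_mod h, Nat.mod_eq_of_lt (by omega)]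
    omega
  · rw [Nat.mod_eq_of_lt (by omega)]
    omega

lemma christoffel_eq_mechanicalWord {k M : ℕ} (hk : 0 < k) (hkM : k < M) :
    christoffel k M = mechanicalWord (M - k) M 0 := by
  refine List.ext_getElem (by simp [christoffel]) fun i hi _ => ?_
  simp only [christoffel, List.getElem_map, List.getElem_range, getElem_mechanicalWord,
    zero_add, lowerLetter, div_lt_succ_mul_div_iff i (show M - k < M by omega)]

end MechanicalWord

section Palindrome

variable {α : Type*}

lemma getElem?_cons_append_singleton_eq_of_palindrome {Q : List α} (hQ : Q.Palindrome)
    (a c : α) {i : ℕ} (hi0 : 0 < i) (hi : i ≤ Q.length) :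
    (a :: (Q ++ [c]))[i]? = (a :: (Q ++ [c]))[Q.length + 1 - i]? := by
  obtain ⟨i, rfl⟩ : ∃ i', i = i' + 1 := ⟨i - 1, by omega⟩
  rw [show Q.length + 1 - (i + 1) = (Q.length - 1 - i) + 1 by omega]
  simp only [List.getElem?_cons_succ, List.getElem?_append_left (show i < Q.length by omega),
    List.getElem?_append_left (show Q.length - 1 - i < Q.length by omega)]
  conv_lhs => rw [← hQ.reverse_eq, List.getElem?_reverse (by omega)]

end Palindrome

lemma ZMod.exists_lt_natCast_mul_eq {b M : ℕ} [NeZero M] (hcop : b.Coprime M) (t : ZMod M) :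
    ∃ i < M, (i : ZMod M) * b = t :=
  ⟨(t * (b : ZMod M)⁻¹).val, ZMod.val_lt _, by
    rw [ZMod.natCast_zmod_val, mul_assoc, mul_comm _ (b : ZMod M),
      ZMod.coe_mul_inv_eq_one b hcop, mul_one]⟩

section Reflection

variable {b M s : ℕ}

lemma lowerLetter_reflect (hcop : b.Coprime M) (hbM : b < M)
    (hpal : ∀ i, 0 < i → i < M - 1 →
      lowerLetter b M (s + (i + 1) * b) = lowerLetter b M (s + (M - i) * b))
    {t : ℕ} (ht0 : 0 < t) (htM : t < M) (htb : t + b ≠ M) :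
    lowerLetter b M (s + b + t) = lowerLetter b M (s + M - t) := by
  have : NeZero M := ⟨by omega⟩
  obtain ⟨i, hiM, hit⟩ := ZMod.exists_lt_natCast_mul_eq hcop t
  have hi0 : i ≠ 0 := by
    rintro rfl
    refine ht0.ne' (Nat.eq_zero_of_dvd_of_lt ((ZMod.natCast_eq_zero_iff _ _).1 ?_) htM)
    rw [← hit, Nat.cast_zero, zero_mul]
  have hiM' : i ≠ M - 1 := by
    rintro rfl
    refine htb (Nat.eq_of_dvd_of_lt_two_mul (by omega)
      ((ZMod.natCast_eq_zero_iff _ _).1 ?_) (by omega))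
    rw [Nat.cast_add, ← hit, Nat.cast_sub (by omega : 1 ≤ M), ZMod.natCast_self]
    ring
  have := hpal i (by omega) (by omega)
  rwa [lowerLetter_congr (show ((s + (i + 1) * b : ℕ) : ZMod M) = (s + b + t : ℕ) by
      push_cast
      rw [← hit]
      ring),
    lowerLetter_congr (show ((s + (M - i) * b : ℕ) : ZMod M) = (s + M - t : ℕ) by
      push_cast [Nat.cast_sub hiM.le, Nat.cast_sub (show t ≤ s + M by omega)]
      rw [← hit, ZMod.natCast_self]
      ring)] at this

lemma eq_zero_of_lowerLetter_reflect (hcop : b.Coprime M) (hbM : b < M) (hs : s < b)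
    (hsb : b ≤ (s + b) % M)
    (hrefl : ∀ t, 0 < t → t < M → t + b ≠ M →
      lowerLetter b M (s + b + t) = lowerLetter b M (s + M - t)) :
    s = 0 := by
  by_contra hs0
  have hsbM : s + b < M := by
    by_contra h
    rw [Nat.mod_eq_sub_mod (by omega), Nat.mod_eq_of_lt (by omega)] at hsb
    omega
  have hrefl_one := lowerLetter_eq_lowerLetter_iff.1 (hrefl 1 (by omega) (by omega) (by omega))
  rw [show s + M - 1 = (s - 1) + M by omega, Nat.add_mod_right,
    Nat.mod_eq_of_lt (show s - 1 < M by omega)] at hrefl_one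
  have hM : s + b + 1 = M := by
    have := hrefl_one.2 (by omega)
    by_contra h
    rw [Nat.mod_eq_of_lt (by omega)] at this
    omega
  have hrefl_neg_one := lowerLetter_eq_lowerLetter_iff.1 (hrefl (M - 1) (by omega) (by omega) (by omega))
  rw [show s + b + (M - 1) = (s + b - 1) + M by omega, Nat.add_mod_right,
    Nat.mod_eq_of_lt (show s + b - 1 < M by omega), show s + M - (M - 1) = s + 1 by omega,
    Nat.mod_eq_of_lt (show s + 1 < M by omega)] at hrefl_neg_one
  have hb : b = s + 1 := by omega
  have := hcop.eq_one_of_dvd ⟨2, by omega⟩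
  omega

variable {Q : List (Fin 2)}

lemma lowerLetter_palindromic_of_mechanicalWord_eq (hQ : Q.Palindrome)
    (hform : mechanicalWord b M s = 0 :: (Q ++ [1])) {i : ℕ} (hi0 : 0 < i) (hi : i < M - 1) :
    lowerLetter b M (s + (i + 1) * b) = lowerLetter b M (s + (M - i) * b) := by
  have hlen : Q.length + 2 = M := by simpa using (congrArg List.length hform).symm
  have := getElem?_cons_append_singleton_eq_of_palindrome hQ 0 1 hi0 (by omega)
  rwa [← hform, List.getElem?_eq_getElem (by simp; omega),
    List.getElem?_eq_getElem (by simp; omega), Option.some_inj, getElem_mechanicalWord,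
    getElem_mechanicalWord, show Q.length + 1 - i + 1 = M - i by omega] at this

lemma eq_zero_of_mechanicalWord_eq_cons_palindrome (hcop : b.Coprime M) (hbM : b < M)
    (hsM : s < M) (hQ : Q.Palindrome) (hform : mechanicalWord b M s = 0 :: (Q ++ [1])) :
    s = 0 := by
  have hlen : Q.length + 2 = M := by simpa using (congrArg List.length hform).symm
  have hfirst : (mechanicalWord b M s)[0]? = some 0 := by rw [hform]; rfl
  have hlast : (mechanicalWord b M s)[M - 1]? = some 1 := by rw [hform, ← hlen]; simp
  rw [List.getElem?_eq_getElem (by simp; omega), Option.some_inj, getElem_mechanicalWord,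
    lowerLetter_eq_zero_iff, zero_add, one_mul] at hfirst
  rw [List.getElem?_eq_getElem (by simp; omega), Option.some_inj, getElem_mechanicalWord,
    lowerLetter_eq_one_iff, Nat.sub_add_cancel (by omega), Nat.add_mul_mod_self_left,
    Nat.mod_eq_of_lt hsM] at hlast
  exact eq_zero_of_lowerLetter_reflect hcop hbM hlast hfirst fun t ht0 htM htb =>
    lowerLetter_reflect hcop hbM
      (fun i hi0 hi => lowerLetter_palindromic_of_mechanicalWord_eq hQ hform hi0 hi) ht0 htM htb

end Reflection

theorem stmt_9 (k M : ℕ) (hk : 0 < k) (hkM : k < M)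
    (hcop : Nat.Coprime k (M - k))
    (w' : List (Fin 2)) (hconj : Conj (christoffel k M) w')
    (Q : List (Fin 2)) (hQ : Q.Palindrome) (hform : w' = 0 :: (Q ++ [1])) :
    w' = christoffel k M := by
  obtain ⟨x, y, hxy, rfl⟩ := hconj
  have hcop' : (M - k).Coprime M := by
    simpa [Nat.add_sub_cancel' hkM.le] using Nat.coprime_add_self_right.2 hcop.symm
  have hrot : y ++ x = mechanicalWord (M - k) M (x.length * (M - k) % M) := by
    rw [← List.rotate_append_length_eq, ← hxy, christoffel_eq_mechanicalWord hk hkM,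
      mechanicalWord_rotate, zero_add, mechanicalWord_mod]
  have hs := eq_zero_of_mechanicalWord_eq_cons_palindrome hcop' (by omega)
    (Nat.mod_lt _ (by omega)) hQ (hrot ▸ hform)
  rw [hrot, hs, christoffel_eq_mechanicalWord hk hkM]
end

section
/- The circular word [0 0 1 2 1] over the ternary alphabet {0,1,2} has abelian complexity ρ_n ≤ 3 for all 1 ≤ n ≤ 5, but it is not balanced. -/
/-!
Every factor of a conjugate of `w` is a factor of `w ++ w`, so the Parikh vectors of the
length-`n` circular factors of `w` lie among those of the length-`n` windows of `w ++ w`;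
for `w = 00121` a finite computation shows there are at most three of them for each `n ≤ 5`.
The circular factors `00` and `12` differ by two in the number of zeros, so `[w]` is not balanced.
-/

variable {α : Type*}

theorem CFactor.infix_append_self {u w : List α} (h : CFactor u w) : u <:+: w ++ w := by
  obtain ⟨w', ⟨x, y, rfl, rfl⟩, hu⟩ := h
  exact hu.trans ⟨x, y, by simp⟩

theorem CFactor.of_infix {u w : List α} (h : u <:+: w) : CFactor u w :=
  ⟨w, ⟨[], w, by simp, by simp⟩, h⟩

theorem List.IsInfix.exists_eq_take_drop {u v : List α} (h : u <:+: v) :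
    ∃ k, k + u.length ≤ v.length ∧ u = (v.drop k).take u.length := by
  obtain ⟨s, t, rfl⟩ := h
  exact ⟨s.length, by simp, by simp⟩

section Windows

variable [Fintype α] [DecidableEq α]

def squareWindowParikh (n : ℕ) (w : List α) : Finset (α → ℕ) :=
  (Finset.range (2 * w.length + 1 - n)).image fun k a => (((w ++ w).drop k).take n).count a

theorem circSpec_subset_squareWindowParikh (n : ℕ) (w : List α) :
    circSpec n w ⊆ squareWindowParikh n w := by
  rintro p ⟨u, hu, rfl, rfl⟩
  obtain ⟨k, hk, hwin⟩ := hu.infix_append_self.exists_eq_take_drop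
  simp only [squareWindowParikh, Finset.coe_image, Finset.coe_range, Set.mem_image,
    Set.mem_Iio]
  exact ⟨k, by simp at hk; omega, by rw [← hwin]⟩

theorem circAb_le_card_squareWindowParikh (n : ℕ) (w : List α) :
    circAb n w ≤ (squareWindowParikh n w).card := by
  rw [← Set.ncard_coe_finset]
  exact Set.ncard_le_ncard (circSpec_subset_squareWindowParikh n w) (Finset.finite_toSet _)

end Windows

theorem stmt_13 :
    (∀ n : ℕ, 1 ≤ n → n ≤ 5 → circAb n ([0, 0, 1, 2, 1] : List (Fin 3)) ≤ 3) ∧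
    ¬ CircBalanced ([0, 0, 1, 2, 1] : List (Fin 3)) := by
  refine ⟨fun n _ hn => (circAb_le_card_squareWindowParikh n _).trans ?_, fun hbal => ?_⟩
  · interval_cases n <;> decide
  · have h00 : CFactor [0, 0] ([0, 0, 1, 2, 1] : List (Fin 3)) := .of_infix ⟨[], [1, 2, 1], rfl⟩
    have h12 : CFactor [1, 2] ([0, 0, 1, 2, 1] : List (Fin 3)) := .of_infix ⟨[0, 0], [1], rfl⟩
    have hzeros := hbal _ _ h00 h12 rfl 0
    simp at hzeros
end

section
/- Let C(k, M−k) be a Christoffel word with k even, and let φ be the map sending every 1 to 2 and every even-numbered occurrence of 0 to 1. Then the circular word [φ(C(k, M−k))] has abelian complexity exactly 3 for every length n with 1 ≤ n ≤ M−1. -/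
/-- Auxiliary scan for `phi`: the Boolean records whether the next occurrence
of `0` is odd-numbered. -/
def phiAux : Bool → List (Fin 2) → List (Fin 3)
  | _, [] => []
  | b, a :: t =>
    if a = 0 then (if b then (0 : Fin 3) else 1) :: phiAux (!b) t
    else (2 : Fin 3) :: phiAux b t

/-- `phi` replaces each `1` by `2` and each even-numbered occurrence of `0` by `1`. -/
def phi (w : List (Fin 2)) : List (Fin 3) := phiAux true w

section CircularWord

variable {α : Type*} [DecidableEq α]

theorem mem_circSpec_iff {v : List α} {n : ℕ} (hn : n ≤ v.length) (hv : v ≠ []) {p : α → ℕ} :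
    p ∈ circSpec n v ↔ ∃ s < v.length, (fun a => ((v.rotate s).take n).count a) = p := by
  constructor
  · rintro ⟨u, ⟨w', ⟨x, y, rfl, rfl⟩, l, r, hlr⟩, rfl, rfl⟩
    have hu : u = ((x ++ y).rotate (x.length + l.length)).take u.length := by
      rw [← List.rotate_rotate, List.rotate_append_length_eq, ← hlr,
        List.rotate_eq_drop_append_take (by simp)]
      simp
    refine ⟨(x.length + l.length) % (x ++ y).length, Nat.mod_lt _ (List.length_pos_iff.mpr hv), ?_⟩
    rw [List.rotate_mod, ← hu]
  · rintro ⟨s, hs, rfl⟩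
    refine ⟨_, ⟨v.rotate s, ⟨v.take s, v.drop s, (List.take_append_drop s v).symm,
      List.rotate_eq_drop_append_take hs.le⟩, (List.take_prefix _ _).isInfix⟩, ?_, rfl⟩
    simpa using hn

theorem count_rotate_take_add (v : List α) {s n : ℕ} (hs : s ≤ v.length) (hn : n ≤ v.length)
    (c : α) :
    ((v.rotate s).take n).count c + ((v ++ v).take s).count c =
      ((v ++ v).take (s + n)).count c := by
  have hwindow : ((v ++ v).drop s).take n = (v.rotate s).take n := by
    rw [List.drop_append_of_le_length hs, List.rotate_eq_drop_append_take hs,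
      List.take_append, List.take_append, List.take_take]
    congr 2
    simp only [List.length_drop]
    omega
  rw [List.take_add, List.count_append, hwindow, add_comm]

end CircularWord

theorem count_zero_add_count_one (l : List (Fin 2)) : l.count 0 + l.count 1 = l.length := by
  induction l with
  | nil => rfl
  | cons a t ih =>
    fin_cases a <;>
      simp only [Fin.zero_eta, Fin.mk_one, List.count_cons_self, List.count_cons_of_ne, ne_eq,
        zero_ne_one, one_ne_zero, not_false_eq_true, List.length_cons] <;> omega

theorem phiAux_length (b : Bool) (w : List (Fin 2)) : (phiAux b w).length = w.length := by
  induction w generalizing b with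
  | nil => rfl
  | cons a t ih => by_cases h : a = 0 <;> simp [phiAux, h, ih]

theorem phiAux_take (b : Bool) (w : List (Fin 2)) (j : ℕ) :
    (phiAux b w).take j = phiAux b (w.take j) := by
  induction w generalizing b j with
  | nil => simp [phiAux]
  | cons a t ih =>
    cases j with
    | zero => simp [phiAux]
    | succ j => by_cases h : a = 0 <;> simp [phiAux, h, ih]

theorem phiAux_append (b : Bool) (x y : List (Fin 2)) :
    phiAux b (x ++ y) = phiAux b x ++ phiAux (if Even (x.count 0) then b else !b) y := by
  induction x generalizing b with
  | nil => simp [phiAux]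
  | cons a t ih =>
    by_cases h : a = 0
    · rcases Nat.even_or_odd (t.count 0) with he | ho
      · simp [phiAux, h, ih, he, Nat.even_add_one]
      · simp [phiAux, h, ih, Nat.not_even_iff_odd.mpr ho, ho]
    · simp [phiAux, h, ih]

theorem count_phiAux (b : Bool) (w : List (Fin 2)) :
    (phiAux b w).count 0 = (w.count 0 + b.toNat) / 2 ∧
    (phiAux b w).count 1 = (w.count 0 + (!b).toNat) / 2 ∧
    (phiAux b w).count 2 = w.count 1 := by
  induction w generalizing b with
  | nil => cases b <;> simp [phiAux]
  | cons a t ih =>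
    obtain ⟨ih0, ih1, ih2⟩ := ih (!b)
    obtain ⟨jh0, jh1, jh2⟩ := ih b
    fin_cases a <;> cases b <;>
      simp_all only [phiAux, Fin.zero_eta, Fin.mk_one, Bool.toNat_true, Bool.toNat_false,
        Bool.not_true, Bool.not_false, Bool.false_eq_true, add_zero, ↓reduceIte, ne_eq,
        zero_ne_one, one_ne_zero, Fin.reduceEq, not_false_eq_true, List.count_cons_self,
        List.count_cons_of_ne, and_self, and_true, true_and] <;> omega

theorem phi_append_of_even {x : List (Fin 2)} (hx : Even (x.count 0)) (y : List (Fin 2)) :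
    phi (x ++ y) = phi x ++ phi y := by
  simp [phi, phiAux_append, hx]

theorem count_phi (w : List (Fin 2)) :
    (phi w).count 0 = (w.count 0 + 1) / 2 ∧ (phi w).count 1 = w.count 0 / 2 ∧
    (phi w).count 2 = w.count 1 := by
  simpa [phi] using count_phiAux true w

/-- The Parikh vector of a length-`n` window of `phi w` that covers `z` zeros of `w` and is
preceded by `a` zeros of `w`. -/
def windowParikh (n a z : ℕ) : Fin 3 → ℕ :=
  ![(a + z + 1) / 2 - (a + 1) / 2, (a + z) / 2 - a / 2, n - z]

theorem windowParikh_congr_mod_two {a a' : ℕ} (h : a % 2 = a' % 2) (n z : ℕ) :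
    windowParikh n a z = windowParikh n a' z := by
  simp only [windowParikh, Matrix.vecCons_inj, and_true]
  omega

theorem parikh_rotate_take_phi {w : List (Fin 2)} (hw : Even (w.count 0)) {s n : ℕ}
    (hs : s ≤ w.length) (hn : n ≤ w.length) :
    (fun a => (((phi w).rotate s).take n).count a) =
      windowParikh n (((w ++ w).take s).count 0)
        (((w ++ w).take (s + n)).count 0 - ((w ++ w).take s).count 0) := by
  have hlen : (phi w).length = w.length := phiAux_length true w
  have hwindow (c : Fin 3) :
      (((phi w).rotate s).take n).count c + (phi ((w ++ w).take s)).count c =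
        (phi ((w ++ w).take (s + n))).count c := by
    have hprefix (j : ℕ) : (phi w ++ phi w).take j = phi ((w ++ w).take j) := by
      rw [← phi_append_of_even hw]
      exact phiAux_take true _ j
    rw [← hprefix, ← hprefix]
    exact count_rotate_take_add (phi w) (hlen ▸ hs) (hlen ▸ hn) c
  have hbinary (j : ℕ) (hj : j ≤ w.length + w.length) :
      ((w ++ w).take j).count 0 + ((w ++ w).take j).count 1 = j := by
    simpa [hj] using count_zero_add_count_one ((w ++ w).take j)
  obtain ⟨hs0, hs1, hs2⟩ := count_phi ((w ++ w).take s)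
  obtain ⟨hsn0, hsn1, hsn2⟩ := count_phi ((w ++ w).take (s + n))
  have h0 := hwindow 0
  have h1 := hwindow 1
  have h2 := hwindow 2
  have hbs := hbinary s (by omega)
  have hbsn := hbinary (s + n) (by omega)
  funext i
  fin_cases i <;>
    simp only [windowParikh, Fin.zero_eta, Fin.mk_one, Fin.reduceFinMk, Matrix.cons_val_zero,
      Matrix.cons_val_one, Matrix.cons_val] <;> omega

theorem windowParikh_eq_iff {n a z a' z' : ℕ} (hz : z ≤ n) (hz' : z' ≤ n) :
    windowParikh n a z = windowParikh n a' z' ↔ z = z' ∧ (z % 2 = 0 ∨ a % 2 = a' % 2) := by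
  simp only [windowParikh, Matrix.vecCons_inj, and_true]
  omega

theorem count_one_map_range {g : ℕ → ℕ} (hmono : Monotone g) (hstep : ∀ i, g (i + 1) ≤ g i + 1)
    (j : ℕ) :
    ((List.range j).map fun i => if g i < g (i + 1) then (1 : Fin 2) else 0).count 1 =
      g j - g 0 := by
  induction j with
  | zero => simp
  | succ j ih =>
    have hj := hmono (Nat.le_add_right j 1)
    have h0 := hmono (Nat.zero_le j)
    have hs := hstep j
    rw [List.range_succ, List.map_append, List.count_append, ih]
    by_cases h : g j < g (j + 1) <;>
      simp only [h, if_true, if_false, List.map_cons, List.map_nil, List.count_cons_self,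
        List.count_cons_of_ne, ne_eq, zero_ne_one, not_false_eq_true, List.count_nil] <;> omega

theorem count_one_take_christoffel_append_self {k M : ℕ} (hkM : k ≤ M) (hM : 0 < M) {j : ℕ}
    (hj : j ≤ M + M) :
    ((christoffel k M ++ christoffel k M).take j).count 1 = j * (M - k) / M := by
  set g : ℕ → ℕ := fun i => i * (M - k) / M with hg
  have hmono : Monotone g := fun a b hab => Nat.div_le_div_right (Nat.mul_le_mul_right _ hab)
  have hstep (i : ℕ) : g (i + 1) ≤ g i + 1 := by
    calc (i + 1) * (M - k) / M ≤ (i * (M - k) + M) / M :=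
          Nat.div_le_div_right (by rw [Nat.succ_mul]; omega)
      _ = g i + 1 := Nat.add_div_right _ hM
  have hperiodic : christoffel k M ++ christoffel k M =
      (List.range (M + M)).map fun i => if g i < g (i + 1) then (1 : Fin 2) else 0 := by
    rw [List.range_add, List.map_append, List.map_map]
    congr 1
    have hshift (i : ℕ) : g (M + i) = g i + (M - k) := by
      simp only [hg, Nat.add_mul, Nat.add_comm (M * _), Nat.add_mul_div_left _ _ hM]
    refine List.map_congr_left fun i _ => ?_
    show (if g i < g (i + 1) then (1 : Fin 2) else 0) = if g (M + i) < g (M + i + 1) then 1 else 0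
    rw [Nat.add_assoc, hshift, hshift]
    simp only [Nat.add_lt_add_iff_right]
  rw [hperiodic, ← List.map_take, List.take_range, min_eq_left hj,
    count_one_map_range hmono hstep]
  simp [hg]

theorem add_mod_two_of_mul_sub_eq {k M j q r : ℕ} (hM : Odd M) (hk : Even k) (hkM : k ≤ M)
    (h : j * (M - k) = M * q + r) : (q + r) % 2 = j % 2 := by
  have hM2 : M % 2 = 1 := Nat.odd_iff.mp hM
  have hk2 : k % 2 = 0 := Nat.even_iff.mp hk
  have hd2 : (M - k) % 2 = 1 := by omega
  have hl : j * (M - k) % 2 = j % 2 := by simp [Nat.mul_mod, hd2]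
  have hr : M * q % 2 = q % 2 := by simp [Nat.mul_mod, hM2]
  omega

theorem parikh_rotate_take_phi_christoffel {k M : ℕ} (hkM : k ≤ M) (hk : Even k) (hM : Odd M)
    {s n : ℕ} (hs : s < M) (hn : n ≤ M) :
    (fun a => (((phi (christoffel k M)).rotate s).take n).count a) =
      windowParikh n (s * (M - k) % M)
        (n - n * (M - k) / M - if M ≤ s * (M - k) % M + n * (M - k) % M then 1 else 0) := by
  have hM0 : 0 < M := hM.pos
  have hlen : (christoffel k M).length = M := by simp [christoffel]
  have hzeros (j : ℕ) (hj : j ≤ M + M) :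
      ((christoffel k M ++ christoffel k M).take j).count 0 = j - j * (M - k) / M := by
    have := count_zero_add_count_one ((christoffel k M ++ christoffel k M).take j)
    rw [count_one_take_christoffel_append_self hkM hM0 hj] at this
    simp only [List.length_take, List.length_append, hlen] at this
    omega
  have heven : Even ((christoffel k M).count 0) := by
    have := hzeros M (by omega)
    rw [List.take_left' hlen, Nat.mul_div_cancel_left _ hM0] at this
    rw [this]
    convert hk using 1
    omega
  rw [parikh_rotate_take_phi heven (by omega) (by omega), hzeros s (by omega),
    hzeros (s + n) (by omega)]
  set d := M - k
  have hsplit : (s + n) * d / M =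
      s * d / M + n * d / M + if M ≤ s * d % M + n * d % M then 1 else 0 := by
    have hdecomp : (s + n) * d = (s * d % M + n * d % M) + M * (s * d / M + n * d / M) := by
      have := Nat.div_add_mod (s * d) M
      have := Nat.div_add_mod (n * d) M
      have := Nat.add_mul s n d
      have := Nat.mul_add M (s * d / M) (n * d / M)
      omega
    rw [hdecomp, Nat.add_mul_div_left _ _ hM0]
    have := Nat.mod_lt (s * d) hM0
    have := Nat.mod_lt (n * d) hM0
    split_ifs with hcarry
    · rw [Nat.div_eq_of_lt_le (k := 1) (by omega) (by omega)]
      omega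
    · rw [Nat.div_eq_of_lt (by omega)]
      omega
  have hparity := add_mod_two_of_mul_sub_eq hM hk hkM (Nat.div_add_mod (s * d) M).symm
  have hle (j : ℕ) : j * d / M ≤ j :=
    Nat.div_le_of_le_mul (by rw [Nat.mul_comm M]; exact Nat.mul_le_mul_left j (Nat.sub_le M k))
  have := hle s
  have := hle (s + n)
  rw [windowParikh_congr_mod_two (a' := s * d % M) (by omega)]
  congr 1
  omega

theorem circSpec_phi_christoffel {k M n : ℕ} (hkM : k ≤ M) (hk : Even k) (hM : Odd M)
    (hcop : Nat.Coprime (M - k) M) (hn : n ≤ M) :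
    circSpec n (phi (christoffel k M)) =
      (fun r => windowParikh n r
        (n - n * (M - k) / M - if M ≤ r + n * (M - k) % M then 1 else 0)) '' Set.Iio M := by
  have hlen : (phi (christoffel k M)).length = M := by
    simp [phi, phiAux_length, christoffel]
  ext p
  rw [mem_circSpec_iff (by omega) (List.ne_nil_of_length_pos (by rw [hlen]; exact hM.pos))]
  simp only [Set.mem_image, Set.mem_Iio, hlen]
  constructor
  · rintro ⟨s, hs, rfl⟩
    exact ⟨_, Nat.mod_lt _ hM.pos, (parikh_rotate_take_phi_christoffel hkM hk hM hs hn).symm⟩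
  · rintro ⟨r, hr, rfl⟩
    obtain ⟨s, hs, hsr⟩ := Nat.exists_mul_mod_eq_of_coprime r hcop hM.pos.ne'
    refine ⟨s, hs, ?_⟩
    rw [parikh_rotate_take_phi_christoffel hkM hk hM hs hn, Nat.mul_comm, hsr,
      Nat.mod_eq_of_lt hr]

theorem ncard_image_windowParikh {M n m ρ : ℕ} (hM : Odd M) (hρ : 0 < ρ) (hρM : ρ < M)
    (hmn : m < n) (hparity : (m + ρ) % 2 = n % 2) :
    ((fun r => windowParikh n r (n - m - if M ≤ r + ρ then 1 else 0)) '' Set.Iio M).ncard = 3 := by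
  have hM2 : M % 2 = 1 := Nat.odd_iff.mp hM
  set f := fun r => windowParikh n r (n - m - if M ≤ r + ρ then 1 else 0) with hf
  have hfeq (r r' : ℕ) : f r = f r' ↔ _ := windowParikh_eq_iff (by omega) (by omega)
  have himage : f '' Set.Iio M = {f 0, f (M - 1), f (M - ρ - (n - m) % 2)} := by
    ext p
    simp only [Set.mem_image, Set.mem_Iio, Set.mem_insert_iff, Set.mem_singleton_iff]
    constructor
    · rintro ⟨r, hr, rfl⟩
      simp only [hfeq]
      split_ifs <;> omega
    · rintro (rfl | rfl | rfl)
      · exact ⟨0, hM.pos, rfl⟩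
      · exact ⟨M - 1, by omega, rfl⟩
      · exact ⟨_, by omega, rfl⟩
  rw [himage, Set.ncard_eq_three]
  refine ⟨_, _, _, ?_, ?_, ?_, rfl⟩ <;> simp only [ne_eq, hfeq] <;> split_ifs <;> omega

theorem stmt_16 (k M : ℕ) (hk : 0 < k) (hkM : k < M)
    (hcop : Nat.Coprime k (M - k)) (hke : Even k)
    (n : ℕ) (h1 : 1 ≤ n) (h2 : n ≤ M - 1) :
    circAb n (phi (christoffel k M)) = 3 := by
  have hcopM : Nat.Coprime k M := by
    simpa [Nat.add_sub_cancel' hkM.le] using Nat.coprime_self_add_right.mpr hcop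
  have hcopdM : Nat.Coprime (M - k) M := by
    have := Nat.coprime_add_self_right.mpr hcop.symm
    rwa [Nat.add_sub_cancel' hkM.le] at this
  have hM : Odd M := (hcopM.coprime_dvd_left (even_iff_two_dvd.mp hke)).odd_of_left
  have hρ : 0 < n * (M - k) % M := by
    refine Nat.pos_of_ne_zero fun h => ?_
    have := Nat.le_of_dvd (by omega) (hcopdM.symm.dvd_of_dvd_mul_right (Nat.dvd_of_mod_eq_zero h))
    omega
  have hmn : n * (M - k) / M < n := Nat.div_lt_of_lt_mul <| by
    rw [Nat.mul_comm M]
    exact Nat.mul_lt_mul_of_pos_left (by omega) (by omega)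
  rw [circAb, circSpec_phi_christoffel hkM.le hke hM hcopdM (by omega),
    ncard_image_windowParikh hM hρ (Nat.mod_lt _ hM.pos) hmn
      (add_mod_two_of_mul_sub_eq hM hke hkM.le (Nat.div_add_mod _ M).symm)]
end
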